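/- arXiv:0908.1942 — 3 statements merged into one kernel-verified Lean document; each statement's English description precedes it below -/
import Mathlib

section
/- Let λ be an infinite cardinal, let (η_i)_{i∈I} be an orthonormal family in a complex Hilbert space H, let E be a closed subspace of H admitting a dense subset of cardinality at most λ, and let q : H → E be the orthogonal projection. Then the set {i ∈ I : q(η_i) ≠ 0} has cardinality at most λ. -/
/-! A vector with nonzero projection onto `E` is not orthogonal to `E`, hence, by continuity of
the inner product, not orthogonal to some point of a dense subset `D` of `E`. By Bessel's
inequality each point of `D` is non-orthogonal to only countably many `η i`, so the set in
question is covered by `#D ≤ λ` countable sets. -/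

open Cardinal
open scoped InnerProductSpace

universe u

section

variable {𝕜 : Type*} [RCLike 𝕜] {H : Type*} [NormedAddCommGroup H] [InnerProductSpace 𝕜 H]

theorem Orthonormal.countable_setOf_inner_ne_zero {ι : Type*} {v : ι → H} (hv : Orthonormal 𝕜 v)
    (x : H) : {i | ⟪v i, x⟫_𝕜 ≠ 0}.Countable :=
  (hv.inner_products_summable (x := x)).countable_support.mono fun i hi => by simpa using hi

theorem Submodule.exists_mem_inner_ne_zero_of_dense {E : Submodule 𝕜 H} {D : Set E}
    (hD : Dense D) {x : H} (hx : x ∉ Eᗮ) : ∃ d ∈ D, ⟪x, (d : H)⟫_𝕜 ≠ 0 := by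
  by_contra! h
  have hzero : (fun w : E => ⟪x, (w : H)⟫_𝕜) = 0 :=
    Continuous.ext_on hD (by fun_prop) continuous_const h
  exact hx ((Submodule.mem_orthogonal' E x).mpr fun v hv => congrFun hzero ⟨v, hv⟩)

end

theorem Orthonormal.mk_setOf_orthogonalProjectionOnto_ne_zero_le {𝕜 : Type*} [RCLike 𝕜]
    {ι H : Type u} [NormedAddCommGroup H] [InnerProductSpace 𝕜 H] {v : ι → H}
    (hv : Orthonormal 𝕜 v)
    (E : Submodule 𝕜 H) [E.HasOrthogonalProjection] {D : Set E} (hD : Dense D) :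
    #{i | E.orthogonalProjectionOnto (v i) ≠ 0} ≤ #D * ℵ₀ := by
  have hsub : {i | E.orthogonalProjectionOnto (v i) ≠ 0} ⊆ ⋃ d ∈ D, {i | ⟪v i, (d : H)⟫_𝕜 ≠ 0} :=
    fun i hi => by
      obtain ⟨d, hdD, hd⟩ := Submodule.exists_mem_inner_ne_zero_of_dense hD
        (mt Submodule.orthogonalProjectionOnto_eq_zero_iff.mpr hi)
      exact Set.mem_biUnion hdD hd
  calc #{i | E.orthogonalProjectionOnto (v i) ≠ 0}
      ≤ #(⋃ d ∈ D, {i | ⟪v i, (d : H)⟫_𝕜 ≠ 0}) := mk_le_mk_of_subset hsub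
    _ ≤ #D * ⨆ d : D, #{i | ⟪v i, (d : H)⟫_𝕜 ≠ 0} := mk_biUnion_le _ _
    _ ≤ #D * ℵ₀ := by
      gcongr
      exact ciSup_le' fun d => mk_le_aleph0_iff.mpr (hv.countable_setOf_inner_ne_zero _)

theorem stmt3_general (lam : Cardinal.{u}) (hlam : ℵ₀ ≤ lam)
    {H : Type u} [NormedAddCommGroup H] [InnerProductSpace ℂ H]
    {I : Type u} (η : I → H) (hη : Orthonormal ℂ η)
    (E : Submodule ℂ H) [CompleteSpace E]
    (hdense : ∃ D : Set E, Dense D ∧ #D ≤ lam) :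
    #{i : I | E.orthogonalProjectionOnto (η i) ≠ 0} ≤ lam := by
  obtain ⟨D, hD, hDcard⟩ := hdense
  calc #{i : I | E.orthogonalProjectionOnto (η i) ≠ 0}
      ≤ #D * ℵ₀ := hη.mk_setOf_orthogonalProjectionOnto_ne_zero_le E hD
    _ ≤ lam * lam := mul_le_mul' hDcard hlam
    _ = lam := mul_eq_self hlam

/-- if `λ` is an infinite cardinal, `(η_i)_{i ∈ I}` is an orthonormal family in a
complex Hilbert space `H`, `E` is a closed subspace of `H` admitting a dense subset of
cardinality at most `λ`, and `q` is the orthogonal projection onto `E`, then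
`{i ∈ I : q(η_i) ≠ 0}` has cardinality at most `λ`. -/
theorem stmt3 (lam : Cardinal.{u}) (hlam : ℵ₀ ≤ lam)
    {H : Type u} [NormedAddCommGroup H] [InnerProductSpace ℂ H] [CompleteSpace H]
    {I : Type u} (η : I → H) (hη : Orthonormal ℂ η)
    (E : Submodule ℂ H) (hclosed : IsClosed (E : Set H)) [CompleteSpace E]
    (hdense : ∃ D : Set E, Dense D ∧ #D ≤ lam) :
    #{i : I | E.orthogonalProjectionOnto (η i) ≠ 0} ≤ lam :=
  stmt3_general lam hlam η hη E hdense
end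

section
/- For every infinite cardinal λ, the Hamel dimension of ℓ²(λ) as a vector space over ℂ equals λ^ℵ₀; in particular every Hamel basis of ℓ²(λ) over ℂ has cardinality λ^ℵ₀. -/
/-!
A vector of `ℓᵖ(τ)` with `0 < p < ∞` has countable support, so it is determined by a sequence in
`τ × ℂ`; hence `dim ℓᵖ(τ) ≤ #ℓᵖ(τ) ≤ (#τ * 𝔠) ^ ℵ₀ = #τ ^ ℵ₀`.

Conversely, identify `τ` with `List τ`, the nodes of the tree of finite sequences in `τ`. A branch
`g : ℕ → τ` passes through the nodes `[g 0, …, g (n-1)]`; put the weight `2⁻ⁿ` on them. Distinct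
branches share only finitely many nodes, so far enough along one branch there is a node missed by
finitely many others, and the `#τ ^ ℵ₀` branch vectors are linearly independent.
-/

open Cardinal

noncomputable section

/-- `ℓ²(λ)`: the complex Hilbert space of square-summable functions on the ordinal `λ.ord`
(realized as the type `λ.ord.toType`). -/
abbrev L2 (θ : Cardinal) : Type := lp (fun _ : θ.ord.ToType => ℂ) 2

universe u

open Function Filter Set
open scoped ENNReal

theorem linearIndependent_of_exists_separating_point {ι τ K : Type*} [Ring K] [NoZeroDivisors K]
    {v : ι → τ → K} (h : ∀ i (s : Finset ι), i ∉ s → ∃ x, v i x ≠ 0 ∧ ∀ j ∈ s, v j x = 0) :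
    LinearIndependent K v := by
  classical
  rw [linearIndependent_iff']
  intro s c hs i hi
  obtain ⟨x, hix, hjx⟩ := h i (s.erase i) (s.notMem_erase i)
  have hsum : ∑ j ∈ s, c j * v j x = 0 := by simpa [Finset.sum_apply] using congrFun hs x
  rw [Finset.sum_eq_single_of_mem i hi fun j hj hji => by
    rw [hjx j (Finset.mem_erase.2 ⟨hji, hj⟩), mul_zero]] at hsum
  exact (mul_eq_zero.1 hsum).resolve_right hix

theorem Memℓp.extend_zero {α τ E : Type*} [NormedAddCommGroup E] {p : ℝ≥0∞} (hp : 0 < p.toReal)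
    {f : α → τ} (hf : Injective f) {a : α → E} (ha : Memℓp a p) :
    Memℓp (extend f a 0) p := by
  refine memℓp_gen ?_
  have hnorm : (fun x => ‖extend f a 0 x‖ ^ p.toReal) = extend f (fun n => ‖a n‖ ^ p.toReal) 0 := by
    funext x
    rw [apply_extend (fun y : E => ‖y‖ ^ p.toReal)]
    congr 1
    funext y
    simp [Real.zero_rpow hp.ne']
  rw [hnorm, summable_extend_zero hf]
  exact (memℓp_gen_iff hp).1 ha

theorem memℓp_geometric {𝕜 : Type*} [NormedField 𝕜] {p : ℝ≥0∞} (hp : 0 < p.toReal) {r : 𝕜}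
    (hr : ‖r‖ < 1) : Memℓp (fun n : ℕ => r ^ n) p := by
  refine memℓp_gen ?_
  simp_rw [norm_pow, ← Real.rpow_pow_comm (norm_nonneg r)]
  exact summable_geometric_of_lt_one (by positivity) (Real.rpow_lt_one (norm_nonneg r) hr hp)

theorem Memℓp.countable_dsupport {α : Type*} {E : α → Type*} [∀ i, NormedAddCommGroup (E i)]
    {p : ℝ≥0∞} {f : ∀ i, E i} (hf : Memℓp f p) (hp : p ≠ ∞) : {i | f i ≠ 0}.Countable := by
  rcases eq_or_ne p 0 with rfl | hp0
  · exact hf.finite_dsupport.countable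
  have hpos : 0 < p.toReal := ENNReal.toReal_pos hp0 hp
  refine ((memℓp_gen_iff hpos).1 hf).countable_support.mono fun i hi => ?_
  simpa [Real.rpow_eq_zero (norm_nonneg _) hpos.ne'] using hi

theorem mk_countable_support_le {τ β : Type*} [Nonempty τ] [Zero β] :
    #{f : τ → β // (support f).Countable} ≤ #(ℕ → τ × β) := by
  choose E hE using fun f : {f : τ → β // (support f).Countable} =>
    Set.countable_iff_exists_subset_range.1 f.2
  refine mk_le_of_injective (f := fun f n => (E f n, f.1 (E f n))) fun f g hfg => ?_
  have hEfg : E f = E g := funext fun n => congrArg Prod.fst (congrFun hfg n)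
  ext x
  by_cases hx : x ∈ range (E f)
  · obtain ⟨n, rfl⟩ := hx
    have := congrArg Prod.snd (congrFun hfg n)
    simp only at this
    rwa [hEfg] at this ⊢
  · rw [notMem_support.1 fun h => hx (hE f h),
      notMem_support.1 fun h => hx (hEfg ▸ hE g h)]

theorem Cardinal.mul_power_aleph0_le_of_le_continuum {a b : Cardinal} (ha : ℵ₀ ≤ a) (hb : b ≤ 𝔠) :
    (a * b) ^ ℵ₀ ≤ a ^ ℵ₀ := by
  have hc : 𝔠 ≤ a ^ ℵ₀ :=
    power_le_power_right ((natCast_lt_aleph0 (n := 2)).le.trans ha)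
  calc (a * b) ^ ℵ₀ ≤ (a * 𝔠) ^ ℵ₀ := power_le_power_right (mul_le_mul_right hb a)
    _ = a ^ ℵ₀ * 𝔠 := by rw [mul_power, continuum_power_aleph0]
    _ = a ^ ℵ₀ := mul_eq_left (aleph0_le_continuum.trans hc) hc continuum_ne_zero

section Branches

variable {τ : Type*} (e : List τ → τ)

def branchNode (g : ℕ → τ) (n : ℕ) : τ := e ((List.range n).map g)

variable {e}

theorem branchNode_injective (he : Injective e) (g : ℕ → τ) : Injective (branchNode e g) :=
  fun m n h => by simpa using congrArg List.length (he h)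

theorem eventually_branchNode_notMem_range (he : Injective e) {g g' : ℕ → τ} (h : g' ≠ g) :
    ∀ᶠ n in atTop, branchNode e g n ∉ range (branchNode e g') := by
  obtain ⟨k, hk⟩ := Function.ne_iff.1 h
  filter_upwards [eventually_gt_atTop k] with n hn
  rintro ⟨m, hm⟩
  have hl := he hm
  obtain rfl : m = n := by simpa using congrArg List.length hl
  exact hk (List.map_inj_left.1 hl k (List.mem_range.2 hn))

variable (e)

def branchVector {K : Type*} [Zero K] (a : ℕ → K) (g : ℕ → τ) : τ → K :=
  extend (branchNode e g) a 0

theorem linearIndependent_branchVector {K : Type*} [Ring K] [NoZeroDivisors K] (he : Injective e)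
    {a : ℕ → K} (ha : ∀ n, a n ≠ 0) : LinearIndependent K (branchVector e a) := by
  refine linearIndependent_of_exists_separating_point fun g s hg => ?_
  have hfar : ∀ᶠ n in atTop, ∀ g' ∈ s, branchNode e g n ∉ range (branchNode e g') :=
    (eventually_all_finset s).2 fun g' hg' =>
      eventually_branchNode_notMem_range he (ne_of_mem_of_not_mem hg' hg)
  obtain ⟨n, hn⟩ := hfar.exists
  refine ⟨branchNode e g n, ?_, fun g' hg' => extend_apply' _ _ _ (hn g' hg')⟩
  rw [branchVector, (branchNode_injective he g).extend_apply]
  exact ha n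

end Branches

namespace lp

variable {τ E : Type*} [NormedAddCommGroup E] {p : ℝ≥0∞}

theorem mk_le_mk_nat_arrow_prod [Nonempty τ] (hp : p ≠ ∞) :
    #(lp (fun _ : τ => E) p) ≤ #(ℕ → τ × E) := by
  let toCountableSupport (f : lp (fun _ : τ => E) p) : {f : τ → E // (support f).Countable} :=
    ⟨f, (lp.memℓp f).countable_dsupport hp⟩
  have hinj : Injective toCountableSupport := fun f g h => lp.ext congr(($h).1)
  exact (mk_le_of_injective hinj).trans mk_countable_support_le

theorem power_aleph0_le_rank {τ 𝕜 : Type u} [Infinite τ] [NormedField 𝕜] {p : ℝ≥0∞}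
    (hp : 0 < p.toReal) {a : ℕ → 𝕜} (ha : Memℓp a p) (ha0 : ∀ n, a n ≠ 0) :
    #τ ^ ℵ₀ ≤ Module.rank 𝕜 (lp (fun _ : τ => 𝕜) p) := by
  obtain ⟨e⟩ : Nonempty (List τ ≃ τ) := Cardinal.eq.1 (mk_list_eq_mk τ)
  let v (g : ℕ → τ) : lp (fun _ : τ => 𝕜) p :=
    ⟨branchVector e a g, ha.extend_zero hp (branchNode_injective e.injective g)⟩
  have hv : LinearIndependent 𝕜 v :=
    .of_comp (LinearMap.pi (lp.evalₗ _ p)) (linearIndependent_branchVector e e.injective ha0)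
  simpa [mk_arrow] using hv.cardinal_le_rank

theorem rank_complex_eq_power_aleph0 {τ : Type} [Infinite τ] {p : ℝ≥0∞} (hp : 0 < p.toReal) :
    Module.rank ℂ (lp (fun _ : τ => ℂ) p) = #τ ^ ℵ₀ := by
  refine le_antisymm ?_ ?_
  · calc Module.rank ℂ (lp (fun _ : τ => ℂ) p) ≤ #(lp (fun _ : τ => ℂ) p) := rank_le_card _ _
      _ ≤ #(ℕ → τ × ℂ) := mk_le_mk_nat_arrow_prod (ENNReal.toReal_pos_iff.1 hp).2.ne
      _ = (#τ * 𝔠) ^ ℵ₀ := by simp [mk_complex]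
      _ ≤ #τ ^ ℵ₀ := mul_power_aleph0_le_of_le_continuum (aleph0_le_mk τ) le_rfl
  · have h2 : ‖(2⁻¹ : ℂ)‖ < 1 := by norm_num
    exact power_aleph0_le_rank hp (memℓp_geometric hp h2) fun n => by simp

end lp

/-- for every infinite cardinal `λ`, the Hamel dimension of `ℓ²(λ)` over `ℂ`
is `λ^ℵ₀`; in particular every Hamel basis of `ℓ²(λ)` over `ℂ` has cardinality `λ^ℵ₀`. -/
theorem stmt7 (lam : Cardinal) (hlam : ℵ₀ ≤ lam) :
    Module.rank ℂ (L2 lam) = lam ^ ℵ₀ ∧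
      ∀ (ι : Type) (_ : Module.Basis ι ℂ (L2 lam)), #ι = lam ^ ℵ₀ := by
  have hmk : #lam.ord.ToType = lam := mk_ord_toType lam
  have : Infinite lam.ord.ToType := Cardinal.infinite_iff.2 (hmk.symm ▸ hlam)
  have hrank : Module.rank ℂ (L2 lam) = lam ^ ℵ₀ := by
    rw [lp.rank_complex_eq_power_aleph0 (by norm_num), hmk]
  exact ⟨hrank, fun ι b => b.mk_eq_rank''.trans hrank⟩
end
end

section
/- Let θ be a regular cardinal with θ > 2^ℵ₀. Then the following are equivalent: (1) for every cardinal λ < θ one has λ^ℵ₀ < θ; (2) every linear subspace Y of any complex Hilbert space with cardinality #Y = θ contains an orthonormal family of cardinality θ. -/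
/-!
(1) ⇒ (2): a maximal orthonormal set `M` of `Y` has trivial orthogonal complement in `Y`, so the
orthogonal projection of `H` onto the closure of `span M` is injective on `Y`. That closure has at
most `max #M 𝔠 ^ ℵ₀` points, which is `< θ` as long as `#M < θ`.

(2) ⇒ (1): if `λ < θ ≤ λ ^ ℵ₀`, then `ℓ²(λ × ℕ)` contains the `λ ^ ℵ₀` distinct vectors
`∑ₙ 2⁻ⁿ e_(g n, n)` for `g : ℕ → λ`, hence a subspace of cardinality `θ`. But by Bessel's
inequality each vector of a Hilbert basis is orthogonal to all but countably many members of an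
orthonormal family, so orthonormal families in `ℓ²(λ × ℕ)` have at most `λ` members.
-/

open Cardinal Submodule
open scoped InnerProductSpace lp

universe u

theorem mk_closure_le_mk_pow_aleph0 {X : Type u} [TopologicalSpace X] [FrechetUrysohnSpace X]
    [T2Space X] (s : Set X) : #(closure s) ≤ #s ^ ℵ₀ := by
  have hseq (x : closure s) : ∃ u : ℕ → s, Filter.Tendsto (fun n ↦ (u n : X)) .atTop (nhds x) := by
    obtain ⟨u, hus, hu⟩ := mem_closure_iff_seq_limit.1 x.2
    exact ⟨fun n ↦ ⟨u n, hus n⟩, hu⟩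
  choose seq hseq using hseq
  have hinj : Function.Injective seq := fun x y hxy ↦
    Subtype.ext <| tendsto_nhds_unique (hseq x) (hxy ▸ hseq y)
  simpa [mk_arrow] using mk_le_of_injective hinj

theorem Submodule.mk_span_le {R M : Type u} [Semiring R] [Infinite R] [AddCommMonoid M]
    [Module R M] (s : Set M) : #(span R s) ≤ max #s #R := by
  rcases s.eq_empty_or_nonempty with rfl | hs
  · simpa using Cardinal.one_le_iff_ne_zero.2 (mk_ne_zero R)
  · have := hs.to_subtype
    have hspan : span R s = LinearMap.range (Finsupp.linearCombination R ((↑) : s → M)) := by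
      rw [Finsupp.range_linearCombination, Subtype.range_coe]
    rw [hspan, ← mk_finsupp_of_infinite']
    exact mk_le_of_surjective (LinearMap.surjective_rangeRestrict _)

theorem Submodule.exists_mk_eq {R M : Type u} [Semiring R] [Infinite R] [AddCommMonoid M]
    [Module R M] {θ : Cardinal.{u}} (hR : #R ≤ θ) (hM : θ ≤ #M) : ∃ Y : Submodule R M, #Y = θ := by
  obtain ⟨T, hT⟩ := le_mk_iff_exists_set.1 hM
  refine ⟨span R T, le_antisymm ((mk_span_le T).trans (max_le hT.le hR)) ?_⟩
  exact hT ▸ mk_le_mk_of_subset subset_span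

variable {𝕜 H : Type u} [RCLike 𝕜] [NormedAddCommGroup H] [InnerProductSpace 𝕜 H]

theorem Submodule.mk_le_mk_pow_aleph0_of_inf_orthogonal_eq_bot [CompleteSpace H]
    {Y K : Submodule 𝕜 H} (h : Y ⊓ Kᗮ = ⊥) : #Y ≤ #K ^ ℵ₀ := by
  set P := K.topologicalClosure.orthogonalProjectionOnto
  have hinj : Function.Injective fun y : Y ↦ P y := by
    intro y₁ y₂ hP
    have hdiff : (y₁ - y₂ : H) ∈ Y ⊓ Kᗮ := by
      refine ⟨sub_mem y₁.2 y₂.2, orthogonal_le K.le_topologicalClosure ?_⟩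
      rw [← orthogonalProjectionOnto_eq_zero_iff, map_sub, sub_eq_zero]
      exact hP
    rw [h, mem_bot, sub_eq_zero] at hdiff
    exact Subtype.ext hdiff
  calc #Y ≤ #K.topologicalClosure := mk_le_of_injective hinj
    _ = #(closure (K : Set H)) := mk_congr (Equiv.setCongr (topologicalClosure_coe K))
    _ ≤ #K ^ ℵ₀ := mk_closure_le_mk_pow_aleph0 _

theorem Submodule.exists_orthonormal_subset_mk_le [CompleteSpace H] (Y : Submodule 𝕜 H) :
    ∃ M ⊆ (Y : Set H), Orthonormal 𝕜 (Subtype.val : M → H) ∧ #Y ≤ max #M #𝕜 ^ ℵ₀ := by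
  obtain ⟨w, -, hw, hmax⟩ := exists_maximal_orthonormal (𝕜 := 𝕜) (s := (∅ : Set Y)) (by simp)
  have hw_perp := (maximal_orthonormal_iff_orthogonalComplement_eq_bot hw).1 hmax
  have hinj : Function.Injective fun x : w ↦ (x : H) :=
    Subtype.val_injective.comp Subtype.val_injective
  refine ⟨Set.range fun x : w ↦ (x : H), by rintro _ ⟨x, rfl⟩; exact x.1.2,
    (orthonormal_subtype_range hinj).2 (hw.comp_linearIsometry Y.subtypeₗᵢ), ?_⟩
  set K := span 𝕜 (Set.range fun x : w ↦ (x : H))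
  have hYK : Y ⊓ Kᗮ = ⊥ := by
    rw [eq_bot_iff]
    rintro y ⟨hyY, hyK⟩
    suffices (⟨y, hyY⟩ : Y) ∈ (span 𝕜 w)ᗮ by simpa [hw_perp] using this
    intro u hu
    refine hyK _ ?_
    simpa [K, Set.image_eq_range] using apply_mem_span_image_of_mem_span Y.subtype hu
  calc #Y ≤ #K ^ ℵ₀ := mk_le_mk_pow_aleph0_of_inf_orthogonal_eq_bot hYK
    _ ≤ _ := power_le_power_right (mk_span_le _)

theorem Orthonormal.mk_le_mul_aleph0 {ι κ : Type u} (b : HilbertBasis ι 𝕜 H) {v : κ → H}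
    (hv : Orthonormal 𝕜 v) : #κ ≤ #ι * ℵ₀ := by
  set A : ι → Set κ := fun i ↦ {k | ⟪v k, b i⟫_𝕜 ≠ 0}
  have hA_countable (i : ι) : (A i).Countable :=
    (hv.inner_products_summable (x := b i)).countable_support.mono fun k hk ↦ by simpa [A] using hk
  have hA_cover : ⋃ i, A i = Set.univ := by
    refine Set.iUnion_eq_univ_iff.2 fun k ↦ ?_
    by_contra! h
    refine hv.ne_zero k (b.repr.injective ?_)
    ext i
    have hi : ⟪v k, b i⟫_𝕜 = 0 := by simpa [A] using h i
    rw [b.repr_apply_apply, ← inner_conj_symm, hi, map_zero, map_zero]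
    rfl
  calc #κ = #(⋃ i, A i) := by rw [hA_cover, mk_univ]
    _ ≤ #ι * ⨆ i, #(A i) := mk_iUnion_le A
    _ ≤ #ι * ℵ₀ := by
      gcongr
      exact ciSup_le' fun i ↦ mk_le_aleph0_iff.2 (hA_countable i).to_subtype

open scoped Classical in
variable (𝕜) in
noncomputable def geomGraph {ι : Type*} (g : ℕ → ι) : ι × ℕ → 𝕜 :=
  fun p ↦ if g p.2 = p.1 then 2⁻¹ ^ p.2 else 0

theorem memℓp_geomGraph {ι : Type*} (g : ℕ → ι) : Memℓp (geomGraph 𝕜 g) 2 := by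
  refine (memℓp_gen_iff (by norm_num)).2 ?_
  have hsupp : ∀ p ∉ Set.range fun n ↦ (g n, n), ‖geomGraph 𝕜 g p‖ ^ (2 : ENNReal).toReal = 0 := by
    rintro ⟨i, n⟩ hp
    have : g n ≠ i := fun h ↦ hp ⟨n, by simp [h]⟩
    simp [geomGraph, this]
  have hinj : Function.Injective fun n ↦ (g n, n) := fun m n h ↦ congrArg Prod.snd h
  rw [← hinj.summable_iff hsupp]
  convert summable_geometric_of_lt_one (r := (2⁻¹ : ℝ) ^ 2) (by positivity) (by norm_num) using 1
  funext n
  simp [geomGraph, ← pow_mul, mul_comm]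

theorem geomGraph_injective (ι : Type*) : Function.Injective (geomGraph 𝕜 (ι := ι)) := by
  intro g h hgh
  funext n
  have := congrFun hgh (g n, n)
  by_contra hne
  simp only [geomGraph, if_neg (Ne.symm hne)] at this
  exact pow_ne_zero n (by norm_num) this

theorem mk_pow_aleph0_le_mk_lp (ι : Type u) : #ι ^ ℵ₀ ≤ #ℓ²(ι × ℕ, 𝕜) := by
  have hinj : Function.Injective fun g : ℕ → ι ↦ (⟨_, memℓp_geomGraph g⟩ : ℓ²(ι × ℕ, 𝕜)) :=
    fun g h hgh ↦ geomGraph_injective ι (congrArg (fun f : ℓ²(ι × ℕ, 𝕜) ↦ (f : ι × ℕ → 𝕜)) hgh)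
  simpa [mk_arrow] using mk_le_of_injective hinj

theorem stmt14_general (θ : Cardinal) (hc : 2 ^ ℵ₀ < θ) :
    (∀ lam < θ, lam ^ ℵ₀ < θ) ↔
      (∀ (H : Type) [NormedAddCommGroup H] [InnerProductSpace ℂ H] [CompleteSpace H]
        (Y : Submodule ℂ H), #Y = θ →
        ∃ S : Set H, S ⊆ (Y : Set H) ∧ Orthonormal ℂ (fun s : S => (s : H)) ∧ #S = θ) := by
  rw [two_power_aleph0] at hc
  constructor
  · intro hpow H _ _ _ Y hY
    obtain ⟨M, hMY, hM, hYM⟩ := Y.exists_orthonormal_subset_mk_le (𝕜 := ℂ)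
    have hθM : θ ≤ #M := by
      by_contra! hM_lt
      rw [mk_complex] at hYM
      exact (hY ▸ hYM).not_gt (hpow _ (max_lt hM_lt hc))
    obtain ⟨S, hSM, hS⟩ := le_mk_iff_exists_subset.1 hθM
    exact ⟨S, hSM.trans hMY, hM.comp _ (Set.inclusion_injective hSM), hS⟩
  · intro hsub lam hlam
    by_contra! hpow
    have hlam_inf : ℵ₀ ≤ lam := by
      by_contra! hfin
      have : lam ^ ℵ₀ ≤ 𝔠 := continuum_power_aleph0 ▸
        power_le_power_right (hfin.le.trans aleph0_le_continuum)
      exact (hpow.trans this).not_gt hc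
    obtain ⟨Y, hY⟩ := exists_mk_eq (R := ℂ) (mk_complex ▸ hc.le)
      (hpow.trans (mk_out lam ▸ mk_pow_aleph0_le_mk_lp (𝕜 := ℂ) lam.out))
    obtain ⟨S, -, hS, hSθ⟩ := hsub _ Y hY
    have hS_le := hS.mk_le_mul_aleph0 (default : HilbertBasis (lam.out × ℕ) ℂ _)
    rw [hSθ, mk_prod, mk_out, lift_id, lift_id, mk_nat, mul_assoc, aleph0_mul_aleph0,
      mul_aleph0_eq hlam_inf] at hS_le
    exact hlam.not_ge hS_le

/-- for a regular cardinal `θ > 2^ℵ₀` the following are equivalent: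
(1) `λ^ℵ₀ < θ` for every cardinal `λ < θ`;
(2) every linear subspace `Y` of any complex Hilbert space with `#Y = θ` contains an
orthonormal family of cardinality `θ`. -/
theorem stmt14 (θ : Cardinal) (hreg : θ.IsRegular) (hc : 2 ^ ℵ₀ < θ) :
    (∀ lam < θ, lam ^ ℵ₀ < θ) ↔
      (∀ (H : Type) [NormedAddCommGroup H] [InnerProductSpace ℂ H] [CompleteSpace H]
        (Y : Submodule ℂ H), #Y = θ →
        ∃ S : Set H, S ⊆ (Y : Set H) ∧ Orthonormal ℂ (fun s : S => (s : H)) ∧ #S = θ) :=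
  stmt14_general θ hc
end
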